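/- arXiv:2009.08969 — 2 statements merged into one kernel-verified Lean document; each statement's English description precedes it below -/
import Mathlib

section
/- (Ramaré-type identity.) Let 𝒫 be a finite set of primes. For every positive integer n that has at least one prime factor in 𝒫, one has 1 = ∑_{p ∈ 𝒫, p ∣ n} 1 / (#{q ∈ 𝒫 : q ∣ n/p} + 𝟙[p ∤ n/p]), where 𝟙[p ∤ m] is 1 if p does not divide m and 0 otherwise. -/
/-!
Write `S` for the primes of `𝒫` dividing `n`. For `p ∈ S`, the primes of `𝒫` dividing `n / p` are
those of `S` other than `p`, together with `p` itself exactly when `p ∣ n / p`; so each denominator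
equals `#S`, and the sum is `#S · (1 / #S) = 1`.
-/

namespace Nat

theorem Coprime.dvd_div_iff_dvd {q p n : ℕ} (hqp : q.Coprime p) (hpn : p ∣ n) :
    q ∣ n / p ↔ q ∣ n := by
  refine ⟨fun h => h.trans (Nat.div_dvd_of_dvd hpn), fun h => hqp.dvd_of_dvd_mul_right ?_⟩
  rwa [Nat.div_mul_cancel hpn]

end Nat

namespace Finset

variable {P : Finset ℕ} {p n : ℕ}

theorem filter_dvd_div_of_dvd_div (hP : ∀ q ∈ P, q.Prime) (hp : p.Prime) (hpn : p ∣ n)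
    (hpnp : p ∣ n / p) : P.filter (· ∣ n / p) = P.filter (· ∣ n) := by
  refine filter_congr fun q hq => ?_
  obtain rfl | hqp := eq_or_ne q p
  · exact iff_of_true hpnp hpn
  · exact ((Nat.coprime_primes (hP q hq) hp).mpr hqp).dvd_div_iff_dvd hpn

theorem filter_dvd_div_of_not_dvd_div (hP : ∀ q ∈ P, q.Prime) (hp : p.Prime) (hpn : p ∣ n)
    (hpnp : ¬ p ∣ n / p) : P.filter (· ∣ n / p) = (P.filter (· ∣ n)).erase p := by
  ext q
  simp only [mem_filter, mem_erase]
  by_cases hqP : q ∈ P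
  · obtain rfl | hqp := eq_or_ne q p
    · simp [hpnp]
    · simp [hqP, hqp, ((Nat.coprime_primes (hP q hqP) hp).mpr hqp).dvd_div_iff_dvd hpn]
  · simp [hqP]

theorem card_filter_dvd_div_add_indicator (hP : ∀ q ∈ P, q.Prime) (hpP : p ∈ P) (hpn : p ∣ n) :
    #(P.filter (· ∣ n / p)) + (if ¬ p ∣ n / p then 1 else 0) = #(P.filter (· ∣ n)) := by
  by_cases hpnp : p ∣ n / p
  · simp [filter_dvd_div_of_dvd_div hP (hP p hpP) hpn hpnp, hpnp]
  · rw [filter_dvd_div_of_not_dvd_div hP (hP p hpP) hpn hpnp, if_pos hpnp,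
      card_erase_add_one (mem_filter.mpr ⟨hpP, hpn⟩)]

end Finset

open Finset in
theorem stmt2_general (P : Finset ℕ) (hP : ∀ p ∈ P, p.Prime) (n : ℕ)
    (hex : ∃ p ∈ P, p ∣ n) :
    (1 : ℝ) = ∑ p ∈ P.filter (· ∣ n),
      1 / (((P.filter (fun q => q ∣ n / p)).card : ℝ) + if ¬ p ∣ n / p then (1:ℝ) else 0) := by
  have hS : (P.filter (· ∣ n)).Nonempty := by
    obtain ⟨p, hpP, hpn⟩ := hex
    exact ⟨p, mem_filter.mpr ⟨hpP, hpn⟩⟩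
  have hdenom : ∀ p ∈ P.filter (· ∣ n),
      ((#(P.filter (· ∣ n / p)) : ℝ) + if ¬ p ∣ n / p then (1 : ℝ) else 0) = #(P.filter (· ∣ n)) := by
    intro p hp
    rw [mem_filter] at hp
    exact_mod_cast card_filter_dvd_div_add_indicator hP hp.1 hp.2
  rw [sum_congr rfl fun p hp => by rw [hdenom p hp], sum_const, nsmul_eq_mul, mul_one_div,
    div_self (by exact_mod_cast hS.card_pos.ne')]

/-- Ramaré-type identity. -/
theorem stmt2 (P : Finset ℕ) (hP : ∀ p ∈ P, p.Prime) (n : ℕ) (hn : 0 < n)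
    (hex : ∃ p ∈ P, p ∣ n) :
    (1 : ℝ) = ∑ p ∈ P.filter (· ∣ n),
      1 / (((P.filter (fun q => q ∣ n / p)).card : ℝ) + if ¬ p ∣ n / p then (1:ℝ) else 0) :=
  stmt2_general P hP n hex
end

section
/- (Dirichlet polynomial mean value theorem.) Let D(s) = ∑_{n ≤ N} a_n n^{-s} with a_n ∈ ℂ. Then ∫_{-T}^{T} |D(it)|² dt = (2T + O(N)) ∑_{n ≤ N} |a_n|², where the implied constant is absolute. -/
/-!
Expanding the square, `∫_{-U}^{U} |D(it)|² dt = ∑_{m,n} Re(a_m conj a_n) J(U, log m - log n)` with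
`J(U, x) = ∫_{-U}^{U} e^{-ixt} dt = 2 sin(Ux) / x` and `J(U, 0) = 2U`. For a single `U` the
off-diagonal terms are only `O(N / |m - n|)`, which loses a logarithm. Averaged over
`U ∈ [A, A + N]` they become `O(1 / (log m - log n)²) = O(N² / (m - n)²)`, whose row sums are
`O(N²)` because `∑ 1/k² ≤ 2`; a Schur test then gives the mean value theorem for the average.
Since `U ↦ ∫_{-U}^{U} |D|²` is nondecreasing, its value at `T` is squeezed between the averages
over `[T - N, T]` and `[T, T + N]`.
-/

open Complex ComplexConjugate Finset intervalIntegral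

-- Here and below `1 / 0 = 0`: the term `k = 0` (resp. `n = m`) contributes nothing.
lemma sum_one_div_sq_le_two (t : Finset ℕ) : ∑ k ∈ t, 1 / (k : ℝ) ^ 2 ≤ 2 := by
  rw [← sum_erase t (f := fun k : ℕ => 1 / (k : ℝ) ^ 2) (a := 0) (by simp)]
  calc ∑ k ∈ t.erase 0, 1 / (k : ℝ) ^ 2
      ≤ ∑ k ∈ Ioo 0 (t.sup id + 1), ((k : ℝ) ^ 2)⁻¹ := by
        simp only [one_div]
        refine sum_le_sum_of_subset_of_nonneg (fun k hk => ?_) (fun _ _ _ => by positivity)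
        have := le_sup (f := id) (mem_of_mem_erase hk)
        simp only [mem_Ioo, id] at this ⊢
        exact ⟨Nat.pos_of_ne_zero (ne_of_mem_erase hk), by omega⟩
    _ ≤ 2 / ((0 : ℕ) + 1) := sum_Ioo_inv_sq_le 0 _
    _ = 2 := by norm_num

lemma sum_one_div_sq_sub_le_four (s : Finset ℕ) (m : ℕ) :
    ∑ n ∈ s, 1 / ((m : ℝ) - n) ^ 2 ≤ 4 := by
  rw [← sum_filter_add_sum_filter_not s (· < m)]
  have below : ∑ n ∈ s with n < m, 1 / ((m : ℝ) - n) ^ 2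
      = ∑ k ∈ (s.filter (· < m)).image (m - ·), 1 / (k : ℝ) ^ 2 := by
    rw [sum_image fun x hx y hy h => by simp only [mem_coe, mem_filter] at hx hy; omega]
    refine sum_congr rfl fun n hn => ?_
    rw [Nat.cast_sub (mem_filter.1 hn).2.le]
  have above : ∑ n ∈ s with ¬n < m, 1 / ((m : ℝ) - n) ^ 2
      = ∑ k ∈ (s.filter (¬· < m)).image (· - m), 1 / (k : ℝ) ^ 2 := by
    rw [sum_image fun x hx y hy h => by simp only [mem_coe, mem_filter] at hx hy; omega]
    refine sum_congr rfl fun n hn => ?_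
    rw [Nat.cast_sub (not_lt.1 (mem_filter.1 hn).2), ← neg_sub, neg_sq]
  rw [below, above]
  linarith [sum_one_div_sq_le_two ((s.filter (· < m)).image (m - ·)),
    sum_one_div_sq_le_two ((s.filter (¬· < m)).image (· - m))]

lemma sum_sum_norm_mul_norm_mul_le {ι E : Type*} [SeminormedAddCommGroup E] (s : Finset ι)
    (a : ι → E) {w : ι → ι → ℝ} {B : ℝ} (hw : ∀ i ∈ s, ∀ j ∈ s, 0 ≤ w i j)
    (hsymm : ∀ i ∈ s, ∀ j ∈ s, w i j = w j i) (hrow : ∀ i ∈ s, ∑ j ∈ s, w i j ≤ B) :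
    ∑ i ∈ s, ∑ j ∈ s, ‖a i‖ * ‖a j‖ * w i j ≤ B * ∑ i ∈ s, ‖a i‖ ^ 2 := by
  have rows : ∑ i ∈ s, ∑ j ∈ s, ‖a i‖ ^ 2 * w i j ≤ B * ∑ i ∈ s, ‖a i‖ ^ 2 := by
    rw [mul_sum]
    refine sum_le_sum fun i hi => ?_
    rw [← mul_sum, mul_comm B]
    exact mul_le_mul_of_nonneg_left (hrow i hi) (sq_nonneg _)
  have cols : ∑ i ∈ s, ∑ j ∈ s, ‖a j‖ ^ 2 * w i j = ∑ i ∈ s, ∑ j ∈ s, ‖a i‖ ^ 2 * w i j := by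
    rw [sum_comm]
    exact sum_congr rfl fun i hi => sum_congr rfl fun j hj => by rw [hsymm j hj i hi]
  calc ∑ i ∈ s, ∑ j ∈ s, ‖a i‖ * ‖a j‖ * w i j
      ≤ ∑ i ∈ s, ∑ j ∈ s, (‖a i‖ ^ 2 * w i j + ‖a j‖ ^ 2 * w i j) / 2 :=
        sum_le_sum fun i hi => sum_le_sum fun j hj => by
          nlinarith [mul_nonneg (sq_nonneg (‖a i‖ - ‖a j‖)) (hw i hi j hj)]
    _ = (∑ i ∈ s, ∑ j ∈ s, ‖a i‖ ^ 2 * w i j + ∑ i ∈ s, ∑ j ∈ s, ‖a j‖ ^ 2 * w i j) / 2 := by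
        simp only [add_div, sum_add_distrib, sum_div]
    _ ≤ B * ∑ i ∈ s, ‖a i‖ ^ 2 := by linarith

lemma abs_sum_sum_re_mul_conj_sub_le {ι : Type*} (s : Finset ι) (a : ι → ℂ)
    {K w : ι → ι → ℝ} {k B : ℝ} (hdiag : ∀ i ∈ s, K i i = k)
    (hoff : ∀ i ∈ s, ∀ j ∈ s, i ≠ j → |K i j| ≤ w i j) (hw : ∀ i ∈ s, ∀ j ∈ s, 0 ≤ w i j)
    (hsymm : ∀ i ∈ s, ∀ j ∈ s, w i j = w j i) (hrow : ∀ i ∈ s, ∑ j ∈ s, w i j ≤ B) :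
    |∑ i ∈ s, ∑ j ∈ s, (a i * conj (a j)).re * K i j - k * ∑ i ∈ s, ‖a i‖ ^ 2|
      ≤ B * ∑ i ∈ s, ‖a i‖ ^ 2 := by
  classical
  have offDiag : ∑ i ∈ s, ∑ j ∈ s, (a i * conj (a j)).re * K i j - k * ∑ i ∈ s, ‖a i‖ ^ 2
      = ∑ i ∈ s, ∑ j ∈ s.erase i, (a i * conj (a j)).re * K i j := by
    rw [mul_sum, ← sum_sub_distrib]
    refine sum_congr rfl fun i hi => ?_
    rw [← add_sum_erase s _ hi, hdiag i hi, mul_conj, normSq_eq_norm_sq, ofReal_re]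
    ring
  rw [offDiag]
  refine (abs_sum_le_sum_abs _ _).trans <| (sum_le_sum fun i _ => abs_sum_le_sum_abs _ _).trans ?_
  refine le_trans ?_ (sum_sum_norm_mul_norm_mul_le s a hw hsymm hrow)
  refine sum_le_sum fun i hi => le_trans (sum_le_sum fun j hj => ?_)
    (sum_le_sum_of_subset_of_nonneg (erase_subset i s) fun j hj _ =>
      mul_nonneg (by positivity) (hw i hi j hj))
  obtain ⟨hji, hj⟩ := mem_erase.1 hj
  rw [abs_mul]
  refine mul_le_mul ?_ (hoff i hi j hj (Ne.symm hji)) (abs_nonneg _) (by positivity)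
  exact (abs_re_le_norm _).trans (by rw [norm_mul, norm_conj])

lemma abs_sub_div_le_abs_log_sub {x y N : ℝ} (hx : 0 < x) (hy : 0 < y) (hxN : x ≤ N)
    (hyN : y ≤ N) : |x - y| / N ≤ |Real.log x - Real.log y| := by
  wlog hyx : y ≤ x generalizing x y
  · rw [abs_sub_comm, abs_sub_comm (Real.log x)]
    exact this hy hx hyN hxN (le_of_not_ge hyx)
  rw [abs_of_nonneg (sub_nonneg.2 hyx),
    abs_of_nonneg (sub_nonneg.2 (Real.log_le_log hy hyx)), ← Real.log_div hx.ne' hy.ne']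
  calc (x - y) / N ≤ (x - y) / x := div_le_div_of_nonneg_left (by linarith) hx hxN
    _ = 1 - (x / y)⁻¹ := by field_simp
    _ ≤ Real.log (x / y) := Real.one_sub_inv_le_log_of_pos (div_pos hx hy)

lemma abs_sub_mul_le_of_integral_window {g : ℝ → ℝ} {c D E T : ℝ}
    (hg : MonotoneOn g (Set.Ici 0)) (hg0 : 0 ≤ g 0) (hc : 0 ≤ c) (hD : 0 < D) (hT : 0 ≤ T)
    (hwin : ∀ A, 0 ≤ A → |(∫ U in A..A + D, g U) - c * (A * D + D ^ 2 / 2)| ≤ E * D) :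
    |g T - c * T| ≤ E + c * D := by
  have hint : ∀ A, 0 ≤ A → IntervalIntegrable g MeasureTheory.volume A (A + D) := fun A hA =>
    (hg.mono fun U hU => by
      rw [Set.uIcc_of_le (by linarith)] at hU; exact le_trans hA hU.1).intervalIntegrable
  have hconst : ∀ A, ∫ _ in A..A + D, g T = D * g T := fun A => by simp
  have hE : 0 ≤ E := nonneg_of_mul_nonneg_left ((abs_nonneg _).trans (hwin 0 le_rfl)) hD
  have upper : D * g T ≤ ∫ U in T..T + D, g U := by
    rw [← hconst]
    exact integral_mono_on (by linarith) intervalIntegrable_const (hint T hT)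
      fun U hU => hg hT (hT.trans hU.1) hU.1
  rw [abs_le]
  refine ⟨?_, by nlinarith [(abs_le.1 (hwin T hT)).2]⟩
  rcases le_or_gt D T with hDT | hTD
  · have lower : ∫ U in (T - D)..(T - D) + D, g U ≤ D * g T := by
      rw [← hconst (T - D)]
      exact integral_mono_on (by linarith) (hint _ (by linarith)) intervalIntegrable_const
        fun U hU => hg (Set.mem_Ici.2 (by linarith [hU.1])) hT (by linarith [hU.2])
    nlinarith [(abs_le.1 (hwin (T - D) (by linarith))).1]
  · nlinarith [hg Set.self_mem_Ici hT hT]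

noncomputable def boxFourier (U x : ℝ) : ℝ :=
  if x = 0 then 2 * U else 2 * Real.sin (U * x) / x

lemma integral_exp_eq_boxFourier (U x : ℝ) :
    ∫ t in (-U)..U, cexp (-(I * x) * t) = boxFourier U x := by
  rcases eq_or_ne x 0 with rfl | hx
  · simp [boxFourier, two_mul]
  have hx' : (x : ℂ) ≠ 0 := ofReal_ne_zero.2 hx
  have hc : -(I * x) ≠ 0 := by simp [hx']
  rw [integral_exp_mul_complex hc, boxFourier, if_neg hx, div_eq_iff hc,
    show -(I * x) * U = ((-(x * U) : ℝ) : ℂ) * I by push_cast; ring,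
    show -(I * x) * ((-U : ℝ) : ℂ) = ((x * U : ℝ) : ℂ) * I by push_cast; ring,
    exp_mul_I, exp_mul_I, ← ofReal_cos, ← ofReal_cos, ← ofReal_sin, ← ofReal_sin,
    Real.cos_neg, Real.sin_neg]
  push_cast
  field_simp
  ring

@[fun_prop]
lemma continuous_boxFourier (x : ℝ) : Continuous (boxFourier · x) := by
  unfold boxFourier
  split_ifs <;> fun_prop

lemma integral_boxFourier_zero (A D : ℝ) :
    ∫ U in A..A + D, boxFourier U 0 = 2 * A * D + D ^ 2 := by
  have h : ∀ U, boxFourier U 0 = 2 * U := fun U => if_pos rfl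
  simp only [h]
  rw [intervalIntegral.integral_const_mul, integral_id]
  ring

lemma abs_integral_boxFourier_le (A B : ℝ) {x : ℝ} (hx : x ≠ 0) :
    |∫ U in A..B, boxFourier U x| ≤ 4 / x ^ 2 := by
  have hcos : |Real.cos (A * x) - Real.cos (B * x)| ≤ 2 := by
    linarith [abs_sub (Real.cos (A * x)) (Real.cos (B * x)), Real.abs_cos_le_one (A * x),
      Real.abs_cos_le_one (B * x)]
  have h : ∀ U, boxFourier U x = 2 / x * Real.sin (U * x) := fun U => by
    rw [boxFourier, if_neg hx]; ring
  simp only [h, integral_const_mul]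
  rw [integral_comp_mul_right Real.sin hx, integral_sin, smul_eq_mul, abs_mul, abs_mul]
  calc |2 / x| * (|x⁻¹| * |Real.cos (A * x) - Real.cos (B * x)|) ≤ |2 / x| * (|x⁻¹| * 2) := by
        gcongr
    _ = 4 / x ^ 2 := by
        rw [abs_div, abs_inv, abs_two, div_mul_eq_mul_div, ← sq_abs x]
        field_simp
        ring

noncomputable def dirichletPoly (N : ℕ) (a : ℕ → ℂ) (t : ℝ) : ℂ :=
  ∑ n ∈ Icc 1 N, a n * (n : ℂ) ^ (-(I * t))

lemma natCast_cpow_neg_I_mul {n : ℕ} (hn : n ≠ 0) (t : ℝ) :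
    (n : ℂ) ^ (-(I * t)) = cexp (-(I * Real.log n) * t) := by
  rw [cpow_def_of_ne_zero (Nat.cast_ne_zero.2 hn), ← natCast_log]
  ring_nf

lemma continuous_dirichletPoly (N : ℕ) (a : ℕ → ℂ) : Continuous (dirichletPoly N a) := by
  refine continuous_finsetSum _ fun n hn => ?_
  simp only [natCast_cpow_neg_I_mul (by grind : n ≠ 0)]
  fun_prop

lemma sq_norm_dirichletPoly (N : ℕ) (a : ℕ → ℂ) (t : ℝ) :
    ‖dirichletPoly N a t‖ ^ 2 = ∑ m ∈ Icc 1 N, ∑ n ∈ Icc 1 N,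
      (a m * conj (a n) * cexp (-(I * (Real.log m - Real.log n : ℝ)) * t)).re := by
  have hexp : ∀ m n : ℕ, cexp (-(I * Real.log m) * t) * conj (cexp (-(I * Real.log n) * t))
      = cexp (-(I * (Real.log m - Real.log n : ℝ)) * t) := fun m n => by
    rw [← exp_conj, ← exp_add]
    simp only [map_mul, map_neg, conj_I, conj_ofReal]
    push_cast
    ring_nf
  have hD : dirichletPoly N a t = ∑ n ∈ Icc 1 N, a n * cexp (-(I * Real.log n) * t) :=
    sum_congr rfl fun n hn => by rw [natCast_cpow_neg_I_mul (by grind) t]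
  rw [← normSq_eq_norm_sq, ← ofReal_re (normSq _), ← mul_conj, hD, map_sum, sum_mul_sum, re_sum]
  refine sum_congr rfl fun m _ => ?_
  rw [re_sum]
  refine sum_congr rfl fun n _ => ?_
  rw [map_mul, ← hexp]
  ring_nf

lemma integral_sq_norm_dirichletPoly (N : ℕ) (a : ℕ → ℂ) (U : ℝ) :
    ∫ t in (-U)..U, ‖dirichletPoly N a t‖ ^ 2 = ∑ m ∈ Icc 1 N, ∑ n ∈ Icc 1 N,
      (a m * conj (a n)).re * boxFourier U (Real.log m - Real.log n) := by
  simp only [sq_norm_dirichletPoly]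
  rw [integral_finsetSum fun m _ => (by fun_prop : Continuous _).intervalIntegrable _ _]
  refine sum_congr rfl fun m _ => ?_
  rw [integral_finsetSum fun n _ => (by fun_prop : Continuous _).intervalIntegrable _ _]
  refine sum_congr rfl fun n _ => ?_
  have hre := intervalIntegral_re (𝕜 := ℂ) (μ := MeasureTheory.volume)
    ((by fun_prop : Continuous fun t : ℝ =>
      a m * conj (a n) * cexp (-(I * (Real.log m - Real.log n : ℝ)) * t)).intervalIntegrable (-U) U)
  simp only [RCLike.re_to_complex] at hre
  rw [hre, integral_const_mul, integral_exp_eq_boxFourier, re_mul_ofReal]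

lemma abs_integral_boxFourier_log_sub_le {N m n : ℕ} (hm : m ∈ Icc 1 N) (hn : n ∈ Icc 1 N)
    (hmn : m ≠ n) (A B : ℝ) :
    |∫ U in A..B, boxFourier U (Real.log m - Real.log n)| ≤ 4 * N ^ 2 / ((m : ℝ) - n) ^ 2 := by
  obtain ⟨hm1, hmN⟩ := mem_Icc.1 hm
  obtain ⟨hn1, hnN⟩ := mem_Icc.1 hn
  have hN : (0 : ℝ) < N := by exact_mod_cast hm1.trans hmN
  have hgap : ((m : ℝ) - n) ^ 2 / N ^ 2 ≤ (Real.log m - Real.log n) ^ 2 := by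
    have h := abs_sub_div_le_abs_log_sub (x := m) (y := n) (N := N) (by exact_mod_cast hm1)
      (by exact_mod_cast hn1) (by exact_mod_cast hmN) (by exact_mod_cast hnN)
    calc ((m : ℝ) - n) ^ 2 / N ^ 2 = (|(m : ℝ) - n| / N) ^ 2 := by rw [div_pow, sq_abs]
      _ ≤ |Real.log m - Real.log n| ^ 2 := pow_le_pow_left₀ (by positivity) h 2
      _ = (Real.log m - Real.log n) ^ 2 := sq_abs _
  have hmn' : (m : ℝ) - n ≠ 0 := sub_ne_zero.2 (by exact_mod_cast hmn)
  have hpos : 0 < ((m : ℝ) - n) ^ 2 / N ^ 2 := by positivity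
  calc |∫ U in A..B, boxFourier U (Real.log m - Real.log n)|
      ≤ 4 / (Real.log m - Real.log n) ^ 2 :=
        abs_integral_boxFourier_le A B (by rintro h; rw [h] at hgap; linarith)
    _ ≤ 4 / (((m : ℝ) - n) ^ 2 / N ^ 2) := div_le_div_of_nonneg_left (by norm_num) hpos hgap
    _ = 4 * N ^ 2 / ((m : ℝ) - n) ^ 2 := by rw [div_div_eq_mul_div]

lemma integral_integral_sq_norm_dirichletPoly (N : ℕ) (a : ℕ → ℂ) (A B : ℝ) :
    ∫ U in A..B, ∫ t in (-U)..U, ‖dirichletPoly N a t‖ ^ 2 = ∑ m ∈ Icc 1 N, ∑ n ∈ Icc 1 N,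
      (a m * conj (a n)).re * ∫ U in A..B, boxFourier U (Real.log m - Real.log n) := by
  simp only [integral_sq_norm_dirichletPoly]
  rw [integral_finsetSum fun m _ => (by fun_prop : Continuous _).intervalIntegrable _ _]
  refine sum_congr rfl fun m _ => ?_
  rw [integral_finsetSum fun n _ => (by fun_prop : Continuous _).intervalIntegrable _ _]
  exact sum_congr rfl fun n _ => intervalIntegral.integral_const_mul _ _

lemma abs_integral_integral_sq_norm_dirichletPoly_sub_le (N : ℕ) (a : ℕ → ℂ) (A : ℝ) :
    |(∫ U in A..A + N, ∫ t in (-U)..U, ‖dirichletPoly N a t‖ ^ 2)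
        - (2 * A * N + N ^ 2) * ∑ n ∈ Icc 1 N, ‖a n‖ ^ 2|
      ≤ 16 * N ^ 2 * ∑ n ∈ Icc 1 N, ‖a n‖ ^ 2 := by
  rw [integral_integral_sq_norm_dirichletPoly]
  refine abs_sum_sum_re_mul_conj_sub_le _ a (w := fun m n => 4 * N ^ 2 / ((m : ℝ) - n) ^ 2)
    (fun m _ => by rw [sub_self, integral_boxFourier_zero])
    (fun m hm n hn hmn => abs_integral_boxFourier_log_sub_le hm hn hmn _ _)
    (fun _ _ _ _ => by positivity) (fun m _ n _ => by rw [← neg_sub, neg_sq]) fun m _ => ?_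
  calc ∑ n ∈ Icc 1 N, 4 * (N : ℝ) ^ 2 / ((m : ℝ) - n) ^ 2
      = 4 * (N : ℝ) ^ 2 * ∑ n ∈ Icc 1 N, 1 / ((m : ℝ) - n) ^ 2 := by
        simp only [mul_sum, mul_one_div]
    _ ≤ 4 * (N : ℝ) ^ 2 * 4 := by gcongr; exact sum_one_div_sq_sub_le_four _ m
    _ = 16 * (N : ℝ) ^ 2 := by ring

lemma monotoneOn_integral_sq_norm_dirichletPoly (N : ℕ) (a : ℕ → ℂ) :
    MonotoneOn (fun U => ∫ t in (-U)..U, ‖dirichletPoly N a t‖ ^ 2) (Set.Ici 0) :=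
  fun T hT _ _ hTU => integral_mono_interval (by linarith [Set.mem_Ici.1 hT])
    (by linarith [Set.mem_Ici.1 hT]) hTU (.of_forall fun _ => by positivity)
    (((continuous_dirichletPoly N a).norm.pow 2).intervalIntegrable _ _)

/-- Dirichlet polynomial mean value theorem. -/
theorem stmt5 : ∃ C : ℝ, 0 < C ∧ ∀ (N : ℕ) (T : ℝ) (a : ℕ → ℂ), 1 ≤ N → 1 ≤ T →
    |(∫ t in (-T)..T,
        ‖∑ n ∈ Finset.Icc 1 N, a n * (n : ℂ) ^ (-(Complex.I * (t:ℂ)))‖ ^ 2)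
      - 2 * T * ∑ n ∈ Finset.Icc 1 N, ‖a n‖ ^ 2|
      ≤ C * N * ∑ n ∈ Finset.Icc 1 N, ‖a n‖ ^ 2 := by
  refine ⟨18, by norm_num, fun N T a hN hT => ?_⟩
  set S := ∑ n ∈ Icc 1 N, ‖a n‖ ^ 2
  have key := abs_sub_mul_le_of_integral_window (c := 2 * S) (D := N) (E := 16 * N * S) (T := T)
    (monotoneOn_integral_sq_norm_dirichletPoly N a) (by simp) (by positivity)
    (by positivity) (by linarith) fun A _ => by
      rw [show 2 * S * (A * N + N ^ 2 / 2) = (2 * A * N + N ^ 2) * S by ring,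
        show 16 * N * S * N = 16 * N ^ 2 * S by ring]
      exact abs_integral_integral_sq_norm_dirichletPoly_sub_le N a A
  change |(∫ t in (-T)..T, ‖dirichletPoly N a t‖ ^ 2) - 2 * T * S| ≤ _
  rw [mul_right_comm 2 T S]
  exact key.trans_eq (by ring)
end
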